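/- Let α, ε > 0, let w̃(k) = Σ_{m=1}^∞ (1 − cos(k m))/m^{1+α}, define Ω²(k) = 4 ε w̃(k) ( ε w̃(k) − A² ) for A > 0, and set A₀ = (4 ε (1 − 2^{−(1+α)}) ζ(1+α))^{1/2}. If 0 < A < A₀, then there exists a unique k_max ∈ (0, π) with w̃(k_max) = A²/(2ε), and min_{k ∈ [−π, π]} Ω²(k) = Ω²(k_max) = Ω²(−k_max) = −A⁴. -/

import Mathlib

open scoped BigOperators

noncomputable section

/-- The dispersion symbol `w̃(k) = Σ_{m=1}^∞ (1 − cos(km))/m^{1+α}`. -/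
def wt (α k : ℝ) : ℝ :=
  ∑' m : ℕ, (1 - Real.cos (k * ((m + 1 : ℕ) : ℝ))) / ((m + 1 : ℕ) : ℝ) ^ (1 + α)

/-- The Riemann zeta function of a real argument `s > 1`, as `Σ_{n=1}^∞ n^{−s}`. -/
def zetaR (s : ℝ) : ℝ := ∑' n : ℕ, 1 / ((n + 1 : ℕ) : ℝ) ^ s

/-- `Ω²(k) = 4 ε w̃(k) (ε w̃(k) − A²)`. -/
def Om2 (α ε A k : ℝ) : ℝ := 4 * ε * wt α k * (ε * wt α k - A ^ 2)

/-- The threshold amplitude `A₀ = (4ε(1 − 2^{−(1+α)}) ζ(1+α))^{1/2}`. -/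
def A0 (α ε : ℝ) : ℝ := Real.sqrt (4 * ε * (1 - (2 : ℝ) ^ (-(1 + α))) * zetaR (1 + α))

/-!
The function `w̃` vanishes at `0`, equals `2 (1 - 2^{-(1+α)}) ζ(1+α) = A₀² / (2ε)` at `π`, and is
strictly increasing on `[0, π]`. Monotonicity comes from the Gamma integral
`Γ(1+α) w̃(k) = ∫₀^∞ t^α G_k(e^{-t}) dt`, where `G_k(r) = wtGen k r = Σ_{m ≥ 1} (1 - cos km) r^m`
equals `r / (1 - r) - Re (z / (1 - z))` with `z = r e^{ik}`, and is strictly increasing in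
`k ∈ [0, π]` for every `r ∈ (0, 1)`. The intermediate value theorem and injectivity then give a
unique `k_max`, and `Ω² = (2ε w̃ - A²)² - A⁴ ≥ -A⁴`, with equality where `w̃ = A² / (2ε)`.
-/

open Real Set MeasureTheory

lemma summable_one_div_succ_rpow {s : ℝ} (hs : 1 < s) :
    Summable (fun n : ℕ => 1 / ((n + 1 : ℕ) : ℝ) ^ s) := by
  simpa using (summable_nat_add_iff 1).2 (Real.summable_one_div_nat_rpow.2 hs)

lemma hasSum_zetaR {s : ℝ} (hs : 1 < s) :
    HasSum (fun n : ℕ => 1 / ((n + 1 : ℕ) : ℝ) ^ s) (zetaR s) :=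
  (summable_one_div_succ_rpow hs).hasSum

lemma hasSum_one_div_odd_rpow {s : ℝ} (hs : 1 < s) :
    HasSum (fun j : ℕ => 1 / ((2 * j + 1 : ℕ) : ℝ) ^ s) ((1 - (2:ℝ) ^ (-s)) * zetaR s) := by
  have hodd : HasSum (fun j : ℕ => 1 / ((2 * j + 1 : ℕ) : ℝ) ^ s) _ :=
    ((summable_one_div_succ_rpow hs).comp_injective
      (mul_right_injective₀ (two_ne_zero' ℕ))).hasSum
  have heven : HasSum (fun j : ℕ => 1 / ((2 * j + 1 + 1 : ℕ) : ℝ) ^ s) ((2:ℝ) ^ (-s) * zetaR s) := by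
    refine ((hasSum_zetaR hs).mul_left (2 ^ (-s))).congr_fun fun j => ?_
    rw [show ((2 * j + 1 + 1 : ℕ) : ℝ) = 2 * ((j + 1 : ℕ) : ℝ) by push_cast; ring,
      mul_rpow zero_le_two (by positivity), rpow_neg zero_le_two]
    field_simp
  have := (hasSum_zetaR hs).unique (hodd.even_add_odd heven)
  convert hodd using 1
  linarith

lemma norm_one_sub_cos_div_le (x : ℝ) {y : ℝ} (hy : 0 < y) :
    ‖(1 - cos x) / y‖ ≤ 2 * (1 / y) := by
  rw [norm_div, Real.norm_of_nonneg (sub_nonneg.2 (cos_le_one x)), Real.norm_of_nonneg hy.le,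
    mul_one_div]
  gcongr
  linarith [neg_one_le_cos x]

lemma summable_wt_term {α : ℝ} (hα : 0 < α) (k : ℝ) :
    Summable (fun m : ℕ =>
      (1 - cos (k * ((m + 1 : ℕ) : ℝ))) / ((m + 1 : ℕ) : ℝ) ^ (1 + α)) :=
  .of_norm_bounded ((summable_one_div_succ_rpow (by linarith)).mul_left 2)
    fun _ => norm_one_sub_cos_div_le _ (by positivity)

lemma continuous_wt {α : ℝ} (hα : 0 < α) : Continuous (wt α) :=
  continuous_tsum (fun _ => by fun_prop) ((summable_one_div_succ_rpow (by linarith)).mul_left 2)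
    fun _ _ => norm_one_sub_cos_div_le _ (by positivity)

lemma wt_zero (α : ℝ) : wt α 0 = 0 := by
  simp [wt]

lemma wt_neg (α k : ℝ) : wt α (-k) = wt α k := by
  simp [wt]

lemma wt_pi {α : ℝ} (hα : 0 < α) :
    wt α π = 2 * (1 - (2:ℝ) ^ (-(1 + α))) * zetaR (1 + α) := by
  have hcos (n : ℕ) : cos (π * n) = (-1) ^ n := by rw [mul_comm, cos_nat_mul_pi]
  have hodd : HasSum (fun j : ℕ => (1 - cos (π * ((2 * j + 1 : ℕ) : ℝ))) /
      ((2 * j + 1 : ℕ) : ℝ) ^ (1 + α)) (2 * ((1 - (2:ℝ) ^ (-(1 + α))) * zetaR (1 + α))) := by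
    refine ((hasSum_one_div_odd_rpow (by linarith)).mul_left 2).congr_fun fun j => ?_
    rw [hcos, Odd.neg_one_pow (odd_two_mul_add_one j)]
    ring
  have heven : HasSum (fun j : ℕ => (1 - cos (π * ((2 * j + 1 + 1 : ℕ) : ℝ))) /
      ((2 * j + 1 + 1 : ℕ) : ℝ) ^ (1 + α)) 0 := by
    refine hasSum_zero.congr_fun fun j => ?_
    rw [hcos, Even.neg_one_pow ⟨j + 1, by ring⟩]
    simp
  rw [wt, (HasSum.even_add_odd (f := fun m : ℕ =>
    (1 - cos (π * ((m + 1 : ℕ) : ℝ))) / ((m + 1 : ℕ) : ℝ) ^ (1 + α)) hodd heven).tsum_eq]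
  ring

lemma hasSum_cos_mul_pow {r : ℝ} (hr : |r| < 1) (θ : ℝ) :
    HasSum (fun m : ℕ => cos (θ * ((m + 1 : ℕ) : ℝ)) * r ^ (m + 1))
      ((r * cos θ - r ^ 2) / (1 - 2 * r * cos θ + r ^ 2)) := by
  set z : ℂ := r * Complex.exp (θ * Complex.I)
  have hz : ‖z‖ < 1 := by
    rwa [norm_mul, Complex.norm_exp_ofReal_mul_I, mul_one, Complex.norm_real,
      Real.norm_eq_abs]
  have hpow (n : ℕ) : z ^ n = ((r ^ n : ℝ) : ℂ) * Complex.exp (((θ * n : ℝ)) * Complex.I) := by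
    rw [mul_pow, ← Complex.exp_nat_mul]
    push_cast
    ring_nf
  have hgeom := (Complex.hasSum_re ((hasSum_geometric_of_norm_lt_one hz).mul_left z))
  convert hgeom using 1
  · ext m
    rw [← pow_succ', hpow, Complex.re_ofReal_mul, Complex.exp_ofReal_mul_I_re]
    ring
  · have hre : z.re = r * cos θ := by simp [z, Complex.exp_ofReal_mul_I_re]
    have him : z.im = r * sin θ := by simp [z, Complex.exp_ofReal_mul_I_im]
    rw [← div_eq_mul_inv, Complex.div_re, Complex.normSq_apply]
    simp only [Complex.sub_re, Complex.sub_im, Complex.one_re, Complex.one_im, hre, him]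
    have hden : (1 - r * cos θ) * (1 - r * cos θ) + (0 - r * sin θ) * (0 - r * sin θ)
        = 1 - 2 * r * cos θ + r ^ 2 := by
      linear_combination r ^ 2 * sin_sq_add_cos_sq θ
    rw [hden, ← add_div]
    congr 1
    linear_combination r ^ 2 * sin_sq_add_cos_sq θ

def wtGen (k r : ℝ) : ℝ := ∑' m : ℕ, (1 - cos (k * ((m + 1 : ℕ) : ℝ))) * r ^ (m + 1)

lemma hasSum_wtGen {r : ℝ} (hr : |r| < 1) (k : ℝ) :
    HasSum (fun m : ℕ => (1 - cos (k * ((m + 1 : ℕ) : ℝ))) * r ^ (m + 1))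
      (r / (1 - r) - (r * cos k - r ^ 2) / (1 - 2 * r * cos k + r ^ 2)) := by
  have hgeom : HasSum (fun m : ℕ => r ^ (m + 1)) (r / (1 - r)) := by
    simpa only [pow_succ', div_eq_mul_inv] using (hasSum_geometric_of_abs_lt_one hr).mul_left r
  simpa only [sub_mul, one_mul] using hgeom.sub (hasSum_cos_mul_pow hr k)

lemma wtGen_nonneg (k : ℝ) {r : ℝ} (h0 : 0 ≤ r) : 0 ≤ wtGen k r :=
  tsum_nonneg fun _ => mul_nonneg (sub_nonneg.2 (cos_le_one _)) (by positivity)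

lemma mul_cos_sub_sq_div_lt {r c₁ c₂ : ℝ} (h0 : 0 < r) (h1 : r < 1) (hc : c₁ < c₂)
    (hc₂ : c₂ ≤ 1) :
    (r * c₁ - r ^ 2) / (1 - 2 * r * c₁ + r ^ 2) < (r * c₂ - r ^ 2) / (1 - 2 * r * c₂ + r ^ 2) := by
  have hpos (c : ℝ) (hc : c ≤ 1) : 0 < 1 - 2 * r * c + r ^ 2 := by nlinarith
  rw [div_lt_div_iff₀ (hpos c₁ (hc.le.trans hc₂)) (hpos c₂ hc₂)]
  nlinarith [mul_pos (mul_pos h0 (sub_pos.2 hc)) (show 0 < 1 - r ^ 2 by nlinarith)]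

lemma wtGen_lt_wtGen {r : ℝ} (h0 : 0 < r) (h1 : r < 1) {k₁ k₂ : ℝ} (hk₁ : 0 ≤ k₁)
    (hk : k₁ < k₂) (hk₂ : k₂ ≤ π) : wtGen k₁ r < wtGen k₂ r := by
  have hr : |r| < 1 := by rwa [abs_of_pos h0]
  rw [wtGen, wtGen, (hasSum_wtGen hr k₁).tsum_eq, (hasSum_wtGen hr k₂).tsum_eq]
  have := mul_cos_sub_sq_div_lt h0 h1 (cos_lt_cos_of_nonneg_of_le_pi hk₁ hk₂ hk) (cos_le_one k₁)
  linarith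

lemma lintegral_rpow_mul_exp_neg_pow {s : ℝ} (hs : 0 < s) {n : ℕ} (hn : n ≠ 0) :
    ∫⁻ t in Ioi 0, ENNReal.ofReal (t ^ (s - 1) * exp (-t) ^ n)
      = ENNReal.ofReal (Gamma s / (n : ℝ) ^ s) := by
  have hn' : (0 : ℝ) < n := by positivity
  simp_rw [← exp_nat_mul, mul_neg]
  have key := integral_rpow_mul_exp_neg_mul_Ioi hs hn'
  have hint : IntegrableOn (fun t => t ^ (s - 1) * exp (-(n * t))) (Ioi 0) :=
    .of_integral_ne_zero (by rw [key]; positivity)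
  rw [← ofReal_integral_eq_lintegral_ofReal hint, key, one_div, inv_rpow hn'.le, inv_mul_eq_div]
  filter_upwards [ae_restrict_mem measurableSet_Ioi] with t ht
  exact mul_nonneg (rpow_nonneg (le_of_lt ht) _) (exp_nonneg _)

lemma lintegral_wt {α : ℝ} (hα : 0 < α) (k : ℝ) :
    ∫⁻ t in Ioi 0, ∑' m : ℕ, ENNReal.ofReal
        ((1 - cos (k * ((m + 1 : ℕ) : ℝ))) * (t ^ α * exp (-t) ^ (m + 1)))
      = ENNReal.ofReal (Gamma (1 + α) * wt α k) := by
  have hcoef (m : ℕ) : 0 ≤ 1 - cos (k * ((m + 1 : ℕ) : ℝ)) := sub_nonneg.2 (cos_le_one _)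
  have hterm (m : ℕ) : ∫⁻ t in Ioi 0, ENNReal.ofReal
        ((1 - cos (k * ((m + 1 : ℕ) : ℝ))) * (t ^ α * exp (-t) ^ (m + 1)))
      = ENNReal.ofReal (Gamma (1 + α) * ((1 - cos (k * ((m + 1 : ℕ) : ℝ))) /
          ((m + 1 : ℕ) : ℝ) ^ (1 + α))) := by
    have := lintegral_rpow_mul_exp_neg_pow (s := 1 + α) (by linarith) m.succ_ne_zero
    rw [add_sub_cancel_left] at this
    simp_rw [ENNReal.ofReal_mul (hcoef m)]
    rw [lintegral_const_mul _ (by fun_prop), this, ← ENNReal.ofReal_mul (hcoef m)]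
    congr 1
    ring
  rw [lintegral_tsum fun m => by fun_prop, tsum_congr hterm, wt, ← tsum_mul_left,
    ENNReal.ofReal_tsum_of_nonneg (fun m => by have := hcoef m; positivity)
      ((summable_wt_term hα k).mul_left _)]

lemma tsum_ofReal_mul_pow_eq_wtGen {r : ℝ} (h0 : 0 ≤ r) (h1 : r < 1) (k : ℝ) {c : ℝ}
    (hc : 0 ≤ c) :
    ∑' m : ℕ, ENNReal.ofReal ((1 - cos (k * ((m + 1 : ℕ) : ℝ))) * (c * r ^ (m + 1)))
      = ENNReal.ofReal (c * wtGen k r) := by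
  rw [wtGen, ← tsum_mul_left, ENNReal.ofReal_tsum_of_nonneg]
  · exact tsum_congr fun m => congrArg ENNReal.ofReal (by ring)
  · exact fun m => mul_nonneg hc (mul_nonneg (sub_nonneg.2 (cos_le_one _)) (by positivity))
  · exact (hasSum_wtGen (by rwa [abs_of_nonneg h0]) k).summable.mul_left c

theorem strictMonoOn_wt {α : ℝ} (hα : 0 < α) : StrictMonoOn (wt α) (Icc 0 π) := by
  intro k₁ hk₁ k₂ hk₂ hk
  have hΓ : 0 < Gamma (1 + α) := Gamma_pos_of_pos (by linarith)
  suffices ENNReal.ofReal (Gamma (1 + α) * wt α k₁) < ENNReal.ofReal (Gamma (1 + α) * wt α k₂) from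
    lt_of_mul_lt_mul_left ((ENNReal.ofReal_lt_ofReal_iff'.1 this).1) hΓ.le
  rw [← lintegral_wt hα, ← lintegral_wt hα]
  refine setLIntegral_strict_mono measurableSet_Ioi (by simp) (by fun_prop)
    (by rw [lintegral_wt hα]; exact ENNReal.ofReal_ne_top) (ae_of_all _ fun t (ht : 0 < t) => ?_)
  have hr0 : 0 < exp (-t) := exp_pos _
  have hr1 : exp (-t) < 1 := exp_lt_one_iff.2 (neg_lt_zero.2 ht)
  have htα : 0 < t ^ α := rpow_pos_of_pos ht α
  rw [tsum_ofReal_mul_pow_eq_wtGen hr0.le hr1 k₁ htα.le,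
    tsum_ofReal_mul_pow_eq_wtGen hr0.le hr1 k₂ htα.le,
    ENNReal.ofReal_lt_ofReal_iff_of_nonneg (mul_nonneg htα.le (wtGen_nonneg k₁ hr0.le))]
  exact mul_lt_mul_of_pos_left (wtGen_lt_wtGen hr0 hr1 hk₁.1 hk hk₂.2) htα

lemma A0_eq_sqrt_wt_pi {α : ℝ} (hα : 0 < α) (ε : ℝ) : A0 α ε = √(2 * ε * wt α π) := by
  rw [A0, wt_pi hα]
  ring_nf

lemma Om2_eq_sq_sub (α ε A k : ℝ) : Om2 α ε A k = (2 * ε * wt α k - A ^ 2) ^ 2 - A ^ 4 := by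
  rw [Om2]
  ring

/-- For `0 < A < A₀` there is a unique `k_max ∈ (0,π)` with `w̃(k_max) = A²/(2ε)`, and `Ω²`
is minimized over `[−π,π]` at `k = ±k_max` with minimal value `−A⁴`. -/
theorem Om2_min_small_amplitude (α ε A : ℝ) (hα : 0 < α) (hε : 0 < ε) (hA : 0 < A)
    (hAA0 : A < A0 α ε) :
    ∃ kmax : ℝ, kmax ∈ Set.Ioo 0 Real.pi ∧ wt α kmax = A ^ 2 / (2 * ε) ∧
      (∀ k' ∈ Set.Ioo 0 Real.pi, wt α k' = A ^ 2 / (2 * ε) → k' = kmax) ∧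
      (∀ k ∈ Set.Icc (-Real.pi) Real.pi, Om2 α ε A kmax ≤ Om2 α ε A k) ∧
      Om2 α ε A kmax = Om2 α ε A (-kmax) ∧
      Om2 α ε A kmax = -A ^ 4 := by
  have hA2 : A ^ 2 < 2 * ε * wt α π := by
    rwa [A0_eq_sqrt_wt_pi hα, lt_sqrt hA.le] at hAA0
  have hmem : A ^ 2 / (2 * ε) ∈ Ioo (wt α 0) (wt α π) := by
    rw [wt_zero]
    exact ⟨by positivity, (div_lt_iff₀' (by positivity)).2 hA2⟩
  obtain ⟨kmax, hkmax, hwt⟩ :=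
    intermediate_value_Ioo pi_pos.le (continuous_wt hα).continuousOn hmem
  have hOm2 : Om2 α ε A kmax = -A ^ 4 := by
    rw [Om2_eq_sq_sub, hwt, mul_div_cancel₀ _ (by positivity)]
    ring
  refine ⟨kmax, hkmax, hwt, fun k hk hwtk => ?_, fun k _ => ?_, by rw [Om2, Om2, wt_neg], hOm2⟩
  · exact (strictMonoOn_wt hα).injOn (Ioo_subset_Icc_self hk) (Ioo_subset_Icc_self hkmax)
      (hwtk.trans hwt.symm)
  · rw [hOm2, Om2_eq_sq_sub]
    linarith [sq_nonneg (2 * ε * wt α k - A ^ 2)]
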